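/- Let X be a subshift of edge-to-edge rhombus tilings on a finite shapeset 𝒯 and let 𝒯' ⊆ 𝒯 be such that X' := ρ_{𝒯'}(X) = X ∩ X_{𝒯'}. Define the map φ_{𝒯'} sending a finite 𝒯'-tileset 𝐓' to the 𝒯-tileset 𝐓' ∪ 𝐓_fresh, where 𝐓_fresh contains, for each shape of 𝒯∖𝒯', one tile of that shape carrying a distinct fresh colour (not used in 𝐓') on each of its four edges. Then φ_{𝒯'} is computable and, for every finite 𝒯'-tileset 𝐓', there exists a valid 𝐓'-tiling x with π(x) ∈ X' if and only if there exists a valid φ_{𝒯'}(𝐓')-tiling y with π(y) ∈ X. Consequently Domino(X') many-one reduces to Domino(X). -/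

import Mathlib

open Set Metric

noncomputable section

/-- Points of the euclidean plane. -/
abbrev Pt : Type := EuclideanSpace ℝ (Fin 2)

/-- A rhombus tile in the plane, given by a position (a distinguished vertex)
and its two edge vectors. -/
structure Rhombus where
  pos : Pt
  u : Pt
  v : Pt

namespace Rhombus

/-- A genuine rhombus: linearly independent edge vectors of equal euclidean length. -/
def IsValid (r : Rhombus) : Prop :=
  LinearIndependent ℝ ![r.u, r.v] ∧ ‖r.u‖ = ‖r.v‖

/-- The support of a rhombus: the closed parallelogram it spans. -/
def support (r : Rhombus) : Set Pt :=
  {x | ∃ s t : ℝ, s ∈ Icc (0 : ℝ) 1 ∧ t ∈ Icc (0 : ℝ) 1 ∧ x = r.pos + s • r.u + t • r.v}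

/-- The four vertices of a rhombus. -/
def vertices (r : Rhombus) : Set Pt :=
  {r.pos, r.pos + r.u, r.pos + r.v, r.pos + r.u + r.v}

/-- The four (closed) edges of a rhombus, indexed as in the paper:
edge `0` from `pos` to `pos + u`, edge `1` from `pos + u` to `pos + u + v`,
edge `2` from `pos + u + v` to `pos + v`, edge `3` from `pos + v` to `pos`. -/
def edge (r : Rhombus) : Fin 4 → Set Pt :=
  ![segment ℝ r.pos (r.pos + r.u),
    segment ℝ (r.pos + r.u) (r.pos + r.u + r.v),
    segment ℝ (r.pos + r.u + r.v) (r.pos + r.v),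
    segment ℝ (r.pos + r.v) r.pos]

/-- The set of edges of a rhombus. -/
def edges (r : Rhombus) : Set (Set Pt) := Set.range r.edge

/-- Translation of a rhombus by a vector. -/
def translate (r : Rhombus) (w : Pt) : Rhombus := ⟨r.pos + w, r.u, r.v⟩

/-- The center of a rhombus. -/
def center (r : Rhombus) : Pt := r.pos + (2⁻¹ : ℝ) • r.u + (2⁻¹ : ℝ) • r.v

/-- Two rhombi are translates of each other (same shape up to translation). -/
def SameShape (r s : Rhombus) : Prop := r.u = s.u ∧ r.v = s.v

/-- `w` is one of the two edge directions of `r` (up to sign). -/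
def HasEdgeDir (r : Rhombus) (w : Pt) : Prop :=
  r.u = w ∨ r.u = -w ∨ r.v = w ∨ r.v = -w

end Rhombus

/-- Two rhombi are in edge-to-edge position: they are disjoint, share exactly one
common vertex, or share exactly one full common edge. -/
def EdgeToEdgePair (r s : Rhombus) : Prop :=
  r.support ∩ s.support = ∅ ∨
  (∃ p, p ∈ r.vertices ∧ p ∈ s.vertices ∧ r.support ∩ s.support = {p}) ∨
  (∃ e, e ∈ r.edges ∧ e ∈ s.edges ∧ r.support ∩ s.support = e)

/-- An edge-to-edge rhombus tiling of the plane: a covering of the plane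
without overlap where any two tiles are disjoint, share exactly one vertex or
share a full common edge. -/
def IsTiling (x : Set Rhombus) : Prop :=
  (∀ r ∈ x, r.IsValid) ∧
  (⋃ r ∈ x, r.support) = univ ∧
  ∀ r ∈ x, ∀ s ∈ x, r ≠ s → EdgeToEdgePair r s

/-- Every tile of `x` is a translate of a shape of the shapeset `T`. -/
def UsesShapes (T : Set Rhombus) (x : Set Rhombus) : Prop :=
  ∀ r ∈ x, ∃ s ∈ T, r.SameShape s

/-- An edge-to-edge tiling whose tiles are translates of shapes of `T`. -/
def IsTilingOn (T : Set Rhombus) (x : Set Rhombus) : Prop :=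
  IsTiling x ∧ UsesShapes T x

/-- Support of a patch. -/
def PatchSupport (P : Set Rhombus) : Set Pt := ⋃ r ∈ P, r.support

/-- A patch: a finite nonempty edge-to-edge set of rhombi whose support is
simply connected (no holes). -/
def IsPatch (P : Set Rhombus) : Prop :=
  P.Finite ∧ P.Nonempty ∧ (∀ r ∈ P, r.IsValid) ∧
  (∀ r ∈ P, ∀ s ∈ P, r ≠ s → EdgeToEdgePair r s) ∧
  SimplyConnectedSpace (PatchSupport P)

/-- Translation of a set of rhombi. -/
def translatePatch (P : Set Rhombus) (w : Pt) : Set Rhombus :=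
  (fun r => r.translate w) '' P

/-- The pattern `f` appears in `x`: some translate of `f` is a sub-collection of `x`. -/
def Appears (f : Set Rhombus) (x : Set Rhombus) : Prop :=
  ∃ w : Pt, translatePatch f w ⊆ x

/-- Vertices of a patch. -/
def PatchVertices (P : Set Rhombus) : Set Pt := ⋃ r ∈ P, r.vertices

/-- The support of `P` contains a disk of radius `ρ` centered at a vertex of `P`. -/
def HasRadius (P : Set Rhombus) (ρ : ℝ) : Prop :=
  ∃ c ∈ PatchVertices P, closedBall c ρ ⊆ PatchSupport P

/-- `P` has minimal radius `ρ`: its support contains a disk of radius `ρ` centered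
at one of its vertices, and removing any tile breaks this property. -/
def MinimalRadius (P : Set Rhombus) (ρ : ℝ) : Prop :=
  HasRadius P ρ ∧ ∀ r ∈ P, ¬ HasRadius (P \ {r}) ρ

/-- A rhombus Wang tile: a rhombus with a colour (a natural number) on each edge. -/
structure ColoredRhombus where
  shape : Rhombus
  color : Fin 4 → ℕ

namespace ColoredRhombus

def translate (t : ColoredRhombus) (w : Pt) : ColoredRhombus :=
  ⟨t.shape.translate w, t.color⟩

/-- Two coloured tiles are equal up to translation. -/
def SameTile (t s : ColoredRhombus) : Prop :=
  t.shape.SameShape s.shape ∧ t.color = s.color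

end ColoredRhombus

/-- The colour-erasing operator `π`. -/
def eraseColors (x : Set ColoredRhombus) : Set Rhombus := ColoredRhombus.shape '' x

def translateColoredPatch (P : Set ColoredRhombus) (w : Pt) : Set ColoredRhombus :=
  (fun t => t.translate w) '' P

/-- Any two tiles sharing an edge carry the same colour on the shared edge. -/
def ColorMatching (x : Set ColoredRhombus) : Prop :=
  ∀ t ∈ x, ∀ s ∈ x, t.shape ≠ s.shape →
    ∀ i j : Fin 4, t.shape.edge i = s.shape.edge j → t.color i = s.color j

/-- No two distinct coloured tiles occupy the same rhombus. -/
def ShapeInjective (x : Set ColoredRhombus) : Prop :=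
  ∀ t ∈ x, ∀ s ∈ x, t.shape = s.shape → t = s

/-- A valid tiling by rhombus Wang tiles. -/
def IsColoredTiling (x : Set ColoredRhombus) : Prop :=
  IsTiling (eraseColors x) ∧ ShapeInjective x ∧ ColorMatching x

/-- A valid patch of rhombus Wang tiles. -/
def IsColoredPatch (x : Set ColoredRhombus) : Prop :=
  IsPatch (eraseColors x) ∧ ShapeInjective x ∧ ColorMatching x

/-- All tiles of `x` are translates of tiles of the tileset `T`. -/
def TilesFrom (T : Set ColoredRhombus) (x : Set ColoredRhombus) : Prop :=
  ∀ t ∈ x, ∃ s ∈ T, t.SameTile s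

/-- A subshift on the shapeset `T`: a set of `T`-tilings that is invariant under
translation and closed for the tiling topology (a tiling all of whose finite
patterns appear in tilings of `X` belongs to `X`). -/
def IsSubshift (T : Set Rhombus) (X : Set (Set Rhombus)) : Prop :=
  (∀ x ∈ X, IsTilingOn T x) ∧
  (∀ x ∈ X, ∀ w : Pt, translatePatch x w ∈ X) ∧
  (∀ x, IsTilingOn T x →
    (∀ P, P ⊆ x → P.Finite → P.Nonempty → ∃ y ∈ X, Appears P y) → x ∈ X)

/-- The shape `r` is uniformly recurrent in the tiling `x`: for some `R > 0`,
every disk of radius `R` contains an occurrence (a translate) of `r`. -/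
def UniformlyRecurrentIn (r : Rhombus) (x : Set Rhombus) : Prop :=
  ∃ R : ℝ, 0 < R ∧ ∀ p : Pt, ∃ s ∈ x, s.SameShape r ∧ s.support ⊆ closedBall p R

/-- A shape uniformly recurrent subshift: every shape appearing somewhere in `X`
is uniformly recurrent in every tiling of `X`. -/
def ShapeUniformlyRecurrent (X : Set (Set Rhombus)) : Prop :=
  ∀ r : Rhombus, (∃ y ∈ X, ∃ s ∈ y, s.SameShape r) →
    ∀ x ∈ X, UniformlyRecurrentIn r x

/-- The restriction of `X` to the tilings using only shapes of `T'`. -/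
def restrictShapes (T' : Set Rhombus) (X : Set (Set Rhombus)) : Set (Set Rhombus) :=
  {x ∈ X | UsesShapes T' x}

/-- The subshift on `T` defined by the sequence `F` of forbidden patterns. -/
def SubshiftOfForbidden (T : Set Rhombus) (F : ℕ → Set Rhombus) : Set (Set Rhombus) :=
  {x | IsTilingOn T x ∧ ∀ n : ℕ, ¬ Appears (F n) x}

/-- A chain of rhombuses of normal vector `w` in the tiling `x`: a bi-infinite
sequence of tiles in which any two consecutive tiles share a full common edge of
direction `w`, the chain crossing each of its tiles from one of its two
`w`-edges to the other one. -/
structure Chain (x : Set Rhombus) (w : Pt) where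
  seq : ℤ → Rhombus
  mem : ∀ n : ℤ, seq n ∈ x
  shares : ∀ n : ℤ, ∃ a : Pt,
    segment ℝ a (a + w) ∈ (seq n).edges ∧
    segment ℝ a (a + w) ∈ (seq (n + 1)).edges ∧
    (seq n).support ∩ (seq (n + 1)).support = segment ℝ a (a + w)
  progress : ∀ n : ℤ,
    (seq (n - 1)).support ∩ (seq n).support ≠ (seq n).support ∩ (seq (n + 1)).support

/-- The set of tiles of a chain. -/
def Chain.tiles {x : Set Rhombus} {w : Pt} (c : Chain x w) : Set Rhombus :=
  Set.range c.seq

/-- A symbolic Wang tile on the shapeset indexed by `Fin k`: a shape index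
together with the four edge colours `(a₀, a₁, a₂, a₃)`. -/
abbrev SymbTile (k : ℕ) : Type := Fin k × ℕ × ℕ × ℕ × ℕ

/-- The colours of a symbolic tile, as a function on edge indices. -/
def SymbTile.colors {k : ℕ} (t : SymbTile k) : Fin 4 → ℕ :=
  ![t.2.1, t.2.2.1, t.2.2.2.1, t.2.2.2.2]

/-- The geometric coloured tile `t` is a translate of the symbolic tile `p`. -/
def Realizes {k : ℕ} (shapes : Fin k → Rhombus) (t : ColoredRhombus) (p : SymbTile k) :
    Prop :=
  t.shape.SameShape (shapes p.1) ∧ t.color = SymbTile.colors p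

/-- The Domino problem on the subshift `X`: given a tileset `T`, decide whether
there is a valid tiling by translates of tiles of `T` whose colour-erased image
belongs to `X`. -/
def DominoPred {k : ℕ} (shapes : Fin k → Rhombus) (X : Set (Set Rhombus))
    (T : List (SymbTile k)) : Prop :=
  ∃ x : Set ColoredRhombus, IsColoredTiling x ∧
    (∀ t ∈ x, ∃ p ∈ T, Realizes shapes t p) ∧ eraseColors x ∈ X

/-- A displacement code: a formal integer combination of edge vectors of the shapes. -/
abbrev Disp (k : ℕ) : Type := List (Fin k × ℤ × ℤ)

/-- The vector coded by a displacement code. -/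
def dispVec {k : ℕ} (shapes : Fin k → Rhombus) (d : Disp k) : Pt :=
  (d.map (fun e => (e.2.1 : ℝ) • (shapes e.1).u + (e.2.2 : ℝ) • (shapes e.1).v)).sum

/-- A code for a pattern of (uncoloured) shapes: each entry is a shape index and
the displacement of the corresponding tile. -/
abbrev PatternCode (k : ℕ) : Type := List (Fin k × Disp k)

/-- The pattern coded by a pattern code. -/
def decodePattern {k : ℕ} (shapes : Fin k → Rhombus) (c : PatternCode k) : Set Rhombus :=
  {r | ∃ e ∈ c, r = (shapes e.1).translate (dispVec shapes e.2)}

/-- A code for a pattern of coloured tiles. -/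
abbrev ColoredCode (k : ℕ) : Type := List (SymbTile k × Disp k)

/-- The coloured pattern coded by a coloured pattern code. -/
def decodeColored {k : ℕ} (shapes : Fin k → Rhombus) (c : ColoredCode k) :
    Set ColoredRhombus :=
  {t | ∃ e ∈ c,
    t = ColoredRhombus.mk ((shapes e.1.1).translate (dispVec shapes e.2))
          (SymbTile.colors e.1)}

/-- A decision problem is `Π⁰₁` (co-computably enumerable): there is a total
computable `f` such that `A x ↔ ∀ n, f x n = true`. -/
def Pi01 {α : Type} [Primcodable α] (A : α → Prop) : Prop :=
  ∃ f : α → ℕ → Bool, Computable₂ f ∧ ∀ a, A a ↔ ∀ n : ℕ, f a n = true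

/-- A decision problem is `Π⁰₁`-hard: every `Π⁰₁` problem many-one reduces to it. -/
def Pi01Hard {α : Type} [Primcodable α] (A : α → Prop) : Prop :=
  ∀ (β : Type) [Primcodable β], ∀ B : β → Prop, Pi01 B → ManyOneReducible B A

/-- The four colours of a symbolic tile, as a list. -/
def tileColors {k : ℕ} (t : SymbTile k) : List ℕ :=
  [t.2.1, t.2.2.1, t.2.2.2.1, t.2.2.2.2]

/-- All the colours of a list of symbolic tiles. -/
def allColors {k : ℕ} : List (SymbTile k) → List ℕ
  | [] => []
  | t :: ts => tileColors t ++ allColors ts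

/-- `T = T' ++ Tfresh`, where `Tfresh` has one tile for each shape outside `S`,
all whose colours are pairwise distinct fresh colours not used in `T'`. -/
def FreshExtension {k : ℕ} (S : Finset (Fin k)) (T' T : List (SymbTile k)) : Prop :=
  ∃ Tf : List (SymbTile k), T = T' ++ Tf ∧
    (∀ t ∈ Tf, t.1 ∉ S) ∧
    (∀ i : Fin k, i ∉ S → ∃ t ∈ Tf, t.1 = i) ∧
    (allColors Tf).Nodup ∧
    ∀ c ∈ allColors Tf, c ∉ allColors T'


/-!
A valid tiling by `φ(T') = T' ++ T_fresh` uses no fresh tile, hence is a `T'`-tiling, which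
gives the nontrivial direction of the equivalence. Every tile `r` of a tiling by finitely many
shapes has a neighbour across its edge `0`: the tiles of one shape are pairwise edge-to-edge, so
their positions are uniformly separated and the tiling is locally finite; the union of the tiles
other than `r` is therefore closed, and it contains the points just outside `r` near the midpoint
of that edge, hence the midpoint itself. As the midpoint is not a vertex, the neighbour shares a
full edge with `r`. If `r` were fresh, the colour of that edge could only be matched by the same
fresh tile at the same edge index, that is by a translate of `r` having that edge in the same
place, that is by `r` itself.
-/

open Filter Topology

section General

variable {𝕜 E : Type*} [Field 𝕜] [LinearOrder 𝕜] [IsStrictOrderedRing 𝕜] [AddCommGroup E]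
  [Module 𝕜 E]

lemma eq_zero_of_segment_eq_segment_add {a b w : E}
    (h : segment 𝕜 a b = segment 𝕜 (a + w) (b + w)) : w = 0 := by
  have haw : a + w ∈ segment 𝕜 a b := h ▸ left_mem_segment 𝕜 (a + w) (b + w)
  have ha : a ∈ segment 𝕜 (a + w) (b + w) := h.symm ▸ left_mem_segment 𝕜 a b
  rw [segment_eq_image'] at haw ha
  obtain ⟨t, ⟨ht, -⟩, hat⟩ := haw
  obtain ⟨t', ⟨ht', -⟩, hat'⟩ := ha
  have hsum : (t + t') • (b - a) = 0 := by linear_combination (norm := module) hat + hat'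
  rcases smul_eq_zero.1 hsum with hs | hs
  · simpa [show t = 0 by linarith] using hat.symm
  · simpa [sub_eq_zero.1 hs] using hat.symm

lemma LinearIndependent.eq_zero_or_eq_zero_of_mem_segment {u v x y P : E}
    (h : LinearIndependent 𝕜 ![u, v]) {c d : 𝕜} (h0 : P ∈ segment 𝕜 x y)
    (h1 : P + c • u ∈ segment 𝕜 x y) (h2 : P + d • v ∈ segment 𝕜 x y) : c = 0 ∨ d = 0 := by
  rw [segment_eq_image'] at h0 h1 h2
  obtain ⟨t0, -, e0⟩ := h0
  obtain ⟨t1, -, e1⟩ := h1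
  obtain ⟨t2, -, e2⟩ := h2
  obtain ⟨-, h10⟩ := LinearIndependent.pair_iff.1 h ((t2 - t0) * c) (-((t1 - t0) * d))
    (by linear_combination (norm := module) (t1 - t0) • (e2 - e0) - (t2 - t0) • (e1 - e0))
  rcases mul_eq_zero.1 (neg_eq_zero.1 h10) with h10 | hd
  · obtain rfl : t1 = t0 := by linear_combination h10
    have : c • u = 0 := by linear_combination (norm := module) e0 - e1
    exact .inl ((smul_eq_zero.1 this).resolve_right (h.ne_zero 0))
  · exact .inr hd

end General

lemma Set.Finite.of_pairwise_le_dist {E : Type*} [PseudoMetricSpace E] [ProperSpace E]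
    {ε : NNReal} (hε : 0 < ε) {s : Set E} (hs : s.Pairwise fun p q => ε ≤ dist p q)
    (hb : Bornology.IsBounded s) : s.Finite := by
  obtain ⟨N, -, hNfin, hN⟩ :=
    Metric.exists_finite_isCover_of_isCompact_closure (ε := ε / 4) (by positivity)
      hb.isCompact_closure
  have hsep : Metric.IsSeparated (2 * (ε / 4) : NNReal) s := fun p hp q hq hpq => by
    show ((2 * (ε / 4) : NNReal) : ENNReal) < edist p q
    rw [edist_dist, ← ENNReal.ofReal_coe_nnreal,
      ENNReal.ofReal_lt_ofReal_iff_of_nonneg (by positivity)]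
    have : (0 : ℝ) < ε := hε
    have := hs hp hq hpq
    push_cast
    linarith
  refine Set.encard_lt_top_iff.1 (lt_of_le_of_lt ?_ hNfin.encard_lt_top)
  calc s.encard ≤ Metric.packingNumber (2 * (ε / 4)) s := hsep.encard_le_packingNumber subset_rfl
    _ ≤ Metric.externalCoveringNumber (ε / 4) s :=
        Metric.packingNumber_two_mul_le_externalCoveringNumber _ s
    _ ≤ N.encard := hN.externalCoveringNumber_le_encard

def pairBasis {u v : Pt} (h : LinearIndependent ℝ ![u, v]) : Module.Basis (Fin 2) ℝ Pt :=
  basisOfLinearIndependentOfCardEqFinrank h (by simp)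

lemma pairBasis_repr {u v : Pt} (h : LinearIndependent ℝ ![u, v]) (w : Pt) :
    w = (pairBasis h).repr w 0 • u + (pairBasis h).repr w 1 • v := by
  have hB : ⇑(pairBasis h) = ![u, v] := coe_basisOfLinearIndependentOfCardEqFinrank _ _
  simpa [Fin.sum_univ_two, hB] using ((pairBasis h).sum_repr w).symm

namespace Rhombus

lemma SameShape.symm {r s : Rhombus} (h : r.SameShape s) : s.SameShape r :=
  ⟨h.1.symm, h.2.symm⟩

lemma SameShape.trans {r s t : Rhombus} (h : r.SameShape s) (h' : s.SameShape t) :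
    r.SameShape t :=
  ⟨h.1.trans h'.1, h.2.trans h'.2⟩

lemma eq_translate_of_sameShape {r s : Rhombus} (h : s.SameShape r) :
    s = r.translate (s.pos - r.pos) := by
  obtain ⟨hu, hv⟩ := h
  cases s
  simp_all [translate]

lemma isClosed_support (r : Rhombus) : IsClosed r.support := by
  have : r.support =
      (fun p : ℝ × ℝ => r.pos + p.1 • r.u + p.2 • r.v) '' Icc (0 : ℝ) 1 ×ˢ Icc (0 : ℝ) 1 := by
    ext z
    constructor
    · rintro ⟨s, t, hs, ht, rfl⟩
      exact ⟨(s, t), ⟨hs, ht⟩, rfl⟩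
    · rintro ⟨⟨s, t⟩, ⟨hs, ht⟩, rfl⟩
      exact ⟨s, t, hs, ht, rfl⟩
  rw [this]
  exact ((isCompact_Icc.prod isCompact_Icc).image (by fun_prop)).isClosed

lemma support_subset_closedBall (r : Rhombus) :
    r.support ⊆ closedBall r.pos (‖r.u‖ + ‖r.v‖) := by
  rintro z ⟨s, t, ⟨hs0, hs1⟩, ⟨ht0, ht1⟩, rfl⟩
  rw [mem_closedBall, dist_eq_norm, add_assoc, add_sub_cancel_left]
  calc ‖s • r.u + t • r.v‖ ≤ |s| * ‖r.u‖ + |t| * ‖r.v‖ := by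
        simpa [norm_smul] using norm_add_le (s • r.u) (t • r.v)
    _ ≤ 1 * ‖r.u‖ + 1 * ‖r.v‖ := by
        gcongr <;> rw [abs_le] <;> constructor <;> linarith
    _ = ‖r.u‖ + ‖r.v‖ := by ring

lemma edge_translate (r : Rhombus) (w : Pt) (i : Fin 4) :
    ∃ a b, r.edge i = segment ℝ a b ∧ (r.translate w).edge i = segment ℝ (a + w) (b + w) := by
  fin_cases i <;> refine ⟨_, _, rfl, ?_⟩ <;> simp only [edge, translate] <;> simp <;> congr 1 <;>
    abel

lemma eq_of_sameShape_of_edge_eq {r s : Rhombus} (h : s.SameShape r) {i : Fin 4}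
    (he : s.edge i = r.edge i) : s = r := by
  rw [eq_translate_of_sameShape h] at he ⊢
  obtain ⟨a, b, hr, hs⟩ := r.edge_translate (s.pos - r.pos) i
  rw [eq_zero_of_segment_eq_segment_add (hr.symm.trans (he.symm.trans hs))]
  simp [translate]

lemma not_edgeToEdgePair_translate {r : Rhombus} (h : LinearIndependent ℝ ![r.u, r.v])
    {a b : ℝ} (ha : |a| < 1) (hb : |b| < 1) :
    ¬ EdgeToEdgePair r (r.translate (a • r.u + b • r.v)) := by
  intro hrs
  unfold EdgeToEdgePair at hrs
  obtain ⟨ha1, ha2⟩ := abs_lt.1 ha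
  obtain ⟨hb1, hb2⟩ := abs_lt.1 hb
  -- the intersection contains the rectangle `[a₀, a₁] × [b₀, b₁]` of coordinates, where
  -- `[a₀, a₁] = [0, 1] ∩ [a, 1 + a]` and `[b₀, b₁] = [0, 1] ∩ [b, 1 + b]` are nondegenerate
  set a₀ := max 0 a
  set a₁ := min 1 (1 + a)
  set b₀ := max 0 b
  set b₁ := min 1 (1 + b)
  have : 0 ≤ a₀ ∧ a ≤ a₀ ∧ a₁ ≤ 1 ∧ a₁ ≤ 1 + a ∧ a₀ < a₁ :=
    ⟨le_max_left .., le_max_right .., min_le_left .., min_le_right ..,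
      lt_min (max_lt one_pos (by linarith)) (max_lt (by linarith) (by linarith))⟩
  have : 0 ≤ b₀ ∧ b ≤ b₀ ∧ b₁ ≤ 1 ∧ b₁ ≤ 1 + b ∧ b₀ < b₁ :=
    ⟨le_max_left .., le_max_right .., min_le_left .., min_le_right ..,
      lt_min (max_lt one_pos (by linarith)) (max_lt (by linarith) (by linarith))⟩
  set I := r.support ∩ (r.translate (a • r.u + b • r.v)).support
  have mem_I : ∀ p q : ℝ, a₀ ≤ p → p ≤ a₁ → b₀ ≤ q → q ≤ b₁ → r.pos + p • r.u + q • r.v ∈ I :=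
    fun p q hp hp' hq hq' =>
      ⟨⟨p, q, ⟨by linarith, by linarith⟩, ⟨by linarith, by linarith⟩, rfl⟩,
        ⟨p - a, q - b, ⟨by linarith, by linarith⟩, ⟨by linarith, by linarith⟩,
          by simp only [translate]; module⟩⟩
  set P := r.pos + a₀ • r.u + b₀ • r.v
  have hP : P ∈ I := mem_I a₀ b₀ le_rfl (by linarith) le_rfl (by linarith)
  have hPu : P + (a₁ - a₀) • r.u ∈ I := by
    convert mem_I a₁ b₀ (by linarith) le_rfl le_rfl (by linarith) using 1; module
  have hPv : P + (b₁ - b₀) • r.v ∈ I := by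
    convert mem_I a₀ b₁ le_rfl (by linarith) (by linarith) le_rfl using 1; module
  rcases hrs with h' | ⟨p, -, -, h'⟩ | ⟨e, ⟨i, rfl⟩, -, h'⟩
  · simp [h'] at hP
  · rw [h', mem_singleton_iff] at hP hPu
    have : (a₁ - a₀) • r.u = 0 := by linear_combination (norm := module) hPu - hP
    exact h.ne_zero 0 (by simpa [(by linarith : a₁ - a₀ ≠ 0)] using this)
  · obtain ⟨x, y, hxy⟩ : ∃ x y, r.edge i = segment ℝ x y := by fin_cases i <;> exact ⟨_, _, rfl⟩
    rw [h', hxy] at hP hPu hPv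
    rcases h.eq_zero_or_eq_zero_of_mem_segment hP hPu hPv with h0 | h0 <;> linarith

lemma edgeMidpoint_notMem_vertices {r : Rhombus} (h : LinearIndependent ℝ ![r.u, r.v]) :
    r.pos + (2⁻¹ : ℝ) • r.u ∉ r.vertices := by
  simp only [vertices, mem_insert_iff, mem_singleton_iff]
  rintro (he | he | he | he)
  · have := (LinearIndependent.pair_iff.1 h 2⁻¹ 0 (by linear_combination (norm := module) he)).1
    norm_num at this
  · have := (LinearIndependent.pair_iff.1 h (2⁻¹ - 1) 0
      (by linear_combination (norm := module) he)).1
    norm_num at this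
  · have := (LinearIndependent.pair_iff.1 h 2⁻¹ (-1)
      (by linear_combination (norm := module) he)).1
    norm_num at this
  · have := (LinearIndependent.pair_iff.1 h (2⁻¹ - 1) (-1)
      (by linear_combination (norm := module) he)).1
    norm_num at this

lemma edgeMidpoint_mem_closure_compl_support {r : Rhombus}
    (h : LinearIndependent ℝ ![r.u, r.v]) : r.pos + (2⁻¹ : ℝ) • r.u ∈ closure r.supportᶜ := by
  set m := r.pos + (2⁻¹ : ℝ) • r.u
  have hlim : Tendsto (fun ε : ℝ => m - ε • r.v) (𝓝[>] 0) (𝓝 m) := by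
    have : Continuous (fun ε : ℝ => m - ε • r.v) := by fun_prop
    simpa using (this.tendsto 0).mono_left nhdsWithin_le_nhds
  refine mem_closure_of_tendsto hlim (eventually_nhdsWithin_of_forall fun ε (hε : 0 < ε) => ?_)
  rintro ⟨a, b, -, ⟨hb, -⟩, he⟩
  have := (LinearIndependent.pair_iff.1 h (2⁻¹ - a) (-ε - b)
    (by linear_combination (norm := module) he)).2
  linarith

end Rhombus

lemma finite_of_sameShape_of_isBounded {x : Set Rhombus} (hx : x.Pairwise EdgeToEdgePair)
    {t : Rhombus} (ht : LinearIndependent ℝ ![t.u, t.v]) {A : Set Rhombus} (hAx : A ⊆ x)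
    (hAt : ∀ r ∈ A, r.SameShape t) (hA : Bornology.IsBounded (Rhombus.pos '' A)) : A.Finite := by
  set B := pairBasis ht
  let e : Pt ≃L[ℝ] (Fin 2 → ℝ) := B.equivFun.toContinuousLinearEquiv
  have hpos : InjOn Rhombus.pos A := fun r hr s hs hrs => by
    rw [Rhombus.eq_translate_of_sameShape ((hAt r hr).trans (hAt s hs).symm), hrs, sub_self]
    simp [Rhombus.translate]
  -- in the coordinates of `(t.u, t.v)`, positions of distinct tiles are `1`-apart for the sup
  -- distance, since a translate by a smaller offset overlaps
  have hsep : (e '' (Rhombus.pos '' A)).Pairwise fun p q => 1 ≤ dist p q := by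
    rintro _ ⟨_, ⟨r, hr, rfl⟩, rfl⟩ _ ⟨_, ⟨s, hs, rfl⟩, rfl⟩ hne
    refine not_lt.1 fun hdist => ?_
    have hrs : r ≠ s := fun h => hne (h ▸ rfl)
    have hcoord : ∀ i, |B.repr (s.pos - r.pos) i| < 1 := fun i => by
      have := (dist_pi_lt_iff one_pos).1 hdist i
      simpa [e, Real.dist_eq, abs_sub_comm] using this
    obtain ⟨hu, hv⟩ := hAt r hr
    have hsr := Rhombus.eq_translate_of_sameShape ((hAt s hs).trans (hAt r hr).symm)
    rw [show s.pos - r.pos = B.repr (s.pos - r.pos) 0 • r.u + B.repr (s.pos - r.pos) 1 • r.v by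
      rw [hu, hv]; exact pairBasis_repr ht _] at hsr
    refine Rhombus.not_edgeToEdgePair_translate (by rw [hu, hv]; exact ht) (hcoord 0) (hcoord 1) ?_
    exact hsr ▸ hx (hAx hr) (hAx hs) hrs
  have hfin := Set.Finite.of_pairwise_le_dist (ε := 1) one_pos hsep (e.lipschitz.isBounded_image hA)
  exact (hfin.of_finite_image e.injective.injOn).of_finite_image hpos

lemma finite_setOf_support_inter_closedBall_nonempty {T : Set Rhombus} (hT : T.Finite)
    {x : Set Rhombus} (hval : ∀ r ∈ x, r.IsValid) (hx : x.Pairwise EdgeToEdgePair)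
    (hxT : UsesShapes T x) (c : Pt) (R : ℝ) :
    {r ∈ x | (r.support ∩ closedBall c R).Nonempty}.Finite := by
  have hshape (t : Rhombus) :
      {r ∈ x | r.SameShape t ∧ (r.support ∩ closedBall c R).Nonempty}.Finite := by
    set A := {r ∈ x | r.SameShape t ∧ (r.support ∩ closedBall c R).Nonempty}
    rcases A.eq_empty_or_nonempty with hA | ⟨r₀, hr₀, ht₀, -⟩
    · simp [hA]
    refine finite_of_sameShape_of_isBounded hx (by rw [← ht₀.1, ← ht₀.2]; exact (hval r₀ hr₀).1)
      (fun r hr => hr.1) (fun r hr => hr.2.1)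
      ((isBounded_closedBall (x := c) (r := R + (‖t.u‖ + ‖t.v‖))).subset ?_)
    rintro _ ⟨r, ⟨-, hrt, z, hzr, hzc⟩, rfl⟩
    have := r.support_subset_closedBall hzr
    rw [mem_closedBall] at this hzc ⊢
    rw [← hrt.1, ← hrt.2]
    linarith [dist_triangle r.pos z c, dist_comm r.pos z]
  refine (hT.biUnion fun t _ => hshape t).subset fun r ⟨hr, hrc⟩ => ?_
  obtain ⟨t, ht, hrt⟩ := hxT r hr
  exact mem_biUnion ht ⟨hr, hrt, hrc⟩

lemma locallyFinite_support {T : Set Rhombus} (hT : T.Finite) {x : Set Rhombus}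
    (hval : ∀ r ∈ x, r.IsValid) (hx : x.Pairwise EdgeToEdgePair) (hxT : UsesShapes T x) :
    LocallyFinite fun r : x => r.1.support := fun z =>
  ⟨closedBall z 1, closedBall_mem_nhds z one_pos,
    ((finite_setOf_support_inter_closedBall_nonempty hT hval hx hxT z 1).preimage
      Subtype.val_injective.injOn).subset fun r hr => ⟨r.2, hr⟩⟩

lemma IsTiling.exists_ne_edgeMidpoint_mem_support {T : Set Rhombus} (hT : T.Finite)
    {x : Set Rhombus} (hx : IsTiling x) (hxT : UsesShapes T x) {r : Rhombus} (hr : r ∈ x) :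
    ∃ s ∈ x, s ≠ r ∧ r.pos + (2⁻¹ : ℝ) • r.u ∈ s.support := by
  have hclosed : IsClosed (⋃ s : ↥(x \ {r}), s.1.support) :=
    (locallyFinite_support hT (fun s hs => hx.1 s hs.1)
      (Set.Pairwise.mono sdiff_subset (r := EdgeToEdgePair) hx.2.2)
      fun s hs => hxT s hs.1).isClosed_iUnion fun s => s.1.isClosed_support
  have hcover : r.supportᶜ ⊆ ⋃ s : ↥(x \ {r}), s.1.support := fun z hz => by
    have : z ∈ ⋃ s ∈ x, s.support := hx.2.1 ▸ mem_univ z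
    obtain ⟨s, hs, hzs⟩ := mem_iUnion₂.1 this
    exact mem_iUnion.2 ⟨⟨s, hs, fun h => hz (h ▸ hzs)⟩, hzs⟩
  obtain ⟨⟨s, hs, hsr⟩, hms⟩ := mem_iUnion.1 <| closure_minimal hcover hclosed
    (Rhombus.edgeMidpoint_mem_closure_compl_support (hx.1 r hr).1)
  exact ⟨s, hs, hsr, hms⟩

lemma EdgeToEdgePair.exists_edge_eq {r s : Rhombus} (h : EdgeToEdgePair r s)
    (hr : LinearIndependent ℝ ![r.u, r.v]) (hs : r.pos + (2⁻¹ : ℝ) • r.u ∈ s.support) :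
    ∃ i j, s.edge j = r.edge i := by
  have hm : r.pos + (2⁻¹ : ℝ) • r.u ∈ r.support ∩ s.support :=
    ⟨⟨2⁻¹, 0, by norm_num, by norm_num, by simp⟩, hs⟩
  rcases h with h | ⟨p, hp, -, h⟩ | ⟨e, ⟨i, rfl⟩, ⟨j, hj⟩, -⟩
  · simp [h] at hm
  · rw [h, mem_singleton_iff] at hm
    exact absurd (hm ▸ hp) (Rhombus.edgeMidpoint_notMem_vertices hr)
  · exact ⟨i, j, hj⟩

lemma tileColors_eq_ofFn {k : ℕ} (t : SymbTile k) : tileColors t = List.ofFn t.colors := by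
  simp [tileColors, SymbTile.colors, List.ofFn_succ]

lemma allColors_eq_flatMap {k : ℕ} (L : List (SymbTile k)) :
    allColors L = L.flatMap tileColors := by
  induction L with
  | nil => rfl
  | cons t L ih => simp [allColors, ih]

lemma colors_mem_tileColors {k : ℕ} (t : SymbTile k) (i : Fin 4) : t.colors i ∈ tileColors t := by
  rw [tileColors_eq_ofFn]
  exact (List.mem_ofFn' _ _).2 ⟨i, rfl⟩

lemma colors_mem_allColors {k : ℕ} {L : List (SymbTile k)} {t : SymbTile k} (ht : t ∈ L)
    (i : Fin 4) : t.colors i ∈ allColors L := by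
  rw [allColors_eq_flatMap]
  exact List.mem_flatMap.2 ⟨t, ht, colors_mem_tileColors t i⟩

lemma eq_of_colors_eq_of_fresh {k : ℕ} {T' Tf : List (SymbTile k)} (hnd : (allColors Tf).Nodup)
    (hfresh : ∀ c ∈ allColors Tf, c ∉ allColors T') {p q : SymbTile k} (hp : p ∈ Tf)
    (hq : q ∈ T' ++ Tf) {i j : Fin 4} (h : p.colors i = q.colors j) : q = p ∧ j = i := by
  rcases List.mem_append.1 hq with hq | hq
  · exact absurd (h ▸ colors_mem_allColors hq j) (hfresh _ (colors_mem_allColors hp i))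
  rw [allColors_eq_flatMap, List.nodup_flatMap] at hnd
  obtain rfl : q = p := by
    by_contra hne
    have : Std.Symm (Function.onFun List.Disjoint (tileColors (k := k))) := ⟨fun _ _ h => h.symm⟩
    exact hnd.2.forall hq hp hne (colors_mem_tileColors q j) (h ▸ colors_mem_tileColors p i)
  exact ⟨rfl, List.nodup_ofFn.1 (tileColors_eq_ofFn q ▸ hnd.1 q hq) h.symm⟩

def freshTiles {k : ℕ} : List (Fin k) → ℕ → List (SymbTile k)
  | [], _ => []
  | i :: l, N => (i, N, N + 1, N + 2, N + 3) :: freshTiles l (N + 4)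

lemma fst_mem_of_mem_freshTiles {k : ℕ} {l : List (Fin k)} {N : ℕ} {t : SymbTile k}
    (ht : t ∈ freshTiles l N) : t.1 ∈ l := by
  induction l generalizing N with
  | nil => simp [freshTiles] at ht
  | cons i l ih =>
    rcases List.mem_cons.1 ht with rfl | ht
    · exact List.mem_cons_self
    · exact List.mem_cons_of_mem _ (ih ht)

lemma exists_mem_freshTiles {k : ℕ} {l : List (Fin k)} {i : Fin k} (hi : i ∈ l) (N : ℕ) :
    ∃ t ∈ freshTiles l N, t.1 = i := by
  induction l generalizing N with
  | nil => simp at hi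
  | cons j l ih =>
    rcases List.mem_cons.1 hi with rfl | hi
    · exact ⟨_, List.mem_cons_self, rfl⟩
    · obtain ⟨t, ht, rfl⟩ := ih hi (N + 4)
      exact ⟨t, List.mem_cons_of_mem _ ht, rfl⟩

lemma allColors_freshTiles {k : ℕ} (l : List (Fin k)) (N : ℕ) :
    allColors (freshTiles l N) = List.range' N (4 * l.length) := by
  induction l generalizing N with
  | nil => rfl
  | cons i l ih =>
    rw [List.length_cons, show 4 * (l.length + 1) = 4 + 4 * l.length by ring,
      ← List.range'_append, ← ih]
    simp [freshTiles, allColors, tileColors, List.range'_succ]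

lemma computable_freshTiles {k : ℕ} (l : List (Fin k)) :
    Computable fun N => freshTiles (k := k) l N := by
  have hadd (c : ℕ) : Computable fun N : ℕ => N + c :=
    (Primrec.nat_add.comp Primrec.id (Primrec.const c)).to_comp
  induction l with
  | nil => exact Computable.const []
  | cons i l ih =>
    exact Computable.list_cons.comp ((Computable.const i).pair (Computable.id.pair
      ((hadd 1).pair ((hadd 2).pair (hadd 3))))) (ih.comp (hadd 4))

lemma le_encode_of_mem_tileColors {k : ℕ} {t : SymbTile k} {c : ℕ} (hc : c ∈ tileColors t) :
    c ≤ Encodable.encode t := by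
  obtain ⟨i, c₀, c₁, c₂, c₃⟩ := t
  simp only [tileColors, List.mem_cons, List.not_mem_nil, or_false] at hc
  simp only [Encodable.encode_prod_val, Encodable.encode_nat]
  have := Nat.right_le_pair (Encodable.encode i) (Nat.pair c₀ (Nat.pair c₁ (Nat.pair c₂ c₃)))
  have := Nat.left_le_pair c₀ (Nat.pair c₁ (Nat.pair c₂ c₃))
  have := Nat.right_le_pair c₀ (Nat.pair c₁ (Nat.pair c₂ c₃))
  have := Nat.left_le_pair c₁ (Nat.pair c₂ c₃)
  have := Nat.right_le_pair c₁ (Nat.pair c₂ c₃)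
  have := Nat.left_le_pair c₂ c₃
  have := Nat.right_le_pair c₂ c₃
  rcases hc with rfl | rfl | rfl | rfl <;> omega

lemma le_encode_of_mem_allColors {k : ℕ} {L : List (SymbTile k)} {c : ℕ}
    (hc : c ∈ allColors L) : c ≤ Encodable.encode L := by
  induction L with
  | nil => simp [allColors] at hc
  | cons t L ih =>
    rw [Encodable.encode_list_cons]
    rcases List.mem_append.1 hc with hc | hc
    · have := Nat.left_le_pair (Encodable.encode t) (Encodable.encode L)
      have := le_encode_of_mem_tileColors hc
      omega
    · have := Nat.right_le_pair (Encodable.encode t) (Encodable.encode L)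
      have := ih hc
      omega

/-- The reduction `φ`: the colours of `T'` are at most `encode T'`, so those from
`encode T' + 1` on are fresh. -/
def freshExtend {k : ℕ} (S : Finset (Fin k)) (T' : List (SymbTile k)) : List (SymbTile k) :=
  T' ++ freshTiles (Sᶜ).toList (Encodable.encode T' + 1)

lemma computable_freshExtend {k : ℕ} (S : Finset (Fin k)) : Computable (freshExtend S) :=
  Computable.list_append.comp Computable.id
    ((computable_freshTiles _).comp (Computable.succ.comp Computable.encode))

lemma freshExtension_freshExtend {k : ℕ} (S : Finset (Fin k)) (T' : List (SymbTile k)) :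
    FreshExtension S T' (freshExtend S T') := by
  refine ⟨_, rfl, fun t ht => ?_, fun i hi => exists_mem_freshTiles (by simpa using hi) _, ?_, ?_⟩
  · simpa using fst_mem_of_mem_freshTiles ht
  · rw [allColors_freshTiles]
    exact List.nodup_range'
  · intro c hc hc'
    rw [allColors_freshTiles, List.mem_range'_1] at hc
    have := le_encode_of_mem_allColors hc'
    omega

lemma not_realizes_of_mem_fresh {k : ℕ} (shapes : Fin k → Rhombus) {T' Tf : List (SymbTile k)}
    (hnd : (allColors Tf).Nodup) (hfresh : ∀ c ∈ allColors Tf, c ∉ allColors T')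
    {y : Set ColoredRhombus} (hy : IsColoredTiling y)
    (hreal : ∀ t ∈ y, ∃ p ∈ T' ++ Tf, Realizes shapes t p)
    {t : ColoredRhombus} (ht : t ∈ y) {p : SymbTile k} (hp : p ∈ Tf) :
    ¬ Realizes shapes t p := by
  intro htp
  obtain ⟨hty, -, hmatch⟩ := hy
  have hshapes : UsesShapes (range shapes) (eraseColors y) := by
    rintro _ ⟨t', ht', rfl⟩
    obtain ⟨q, -, htq⟩ := hreal t' ht'
    exact ⟨_, mem_range_self q.1, htq.1⟩
  have htmem : t.shape ∈ eraseColors y := mem_image_of_mem _ ht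
  obtain ⟨_, ⟨t', ht', rfl⟩, hne, hmid⟩ :=
    hty.exists_ne_edgeMidpoint_mem_support (finite_range shapes) hshapes htmem
  obtain ⟨i, j, hji⟩ :=
    (hty.2.2 t.shape htmem t'.shape (mem_image_of_mem _ ht') hne.symm).exists_edge_eq
      (hty.1 _ htmem).1 hmid
  obtain ⟨q, hq, ht'q⟩ := hreal t' ht'
  have hcol : p.colors i = q.colors j := by
    rw [← htp.2, ← ht'q.2]
    exact hmatch t ht t' ht' hne.symm i j hji.symm
  obtain ⟨rfl, rfl⟩ := eq_of_colors_eq_of_fresh hnd hfresh hp hq hcol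
  exact hne (Rhombus.eq_of_sameShape_of_edge_eq (ht'q.1.trans htp.1.symm) hji)

lemma dominoPred_restrictShapes_iff_of_freshExtension {k : ℕ} (shapes : Fin k → Rhombus)
    (X : Set (Set Rhombus)) {S : Finset (Fin k)} {T' T : List (SymbTile k)}
    (hT' : ∀ t ∈ T', t.1 ∈ S) (hT : FreshExtension S T' T) :
    DominoPred shapes (restrictShapes (shapes '' (S : Set (Fin k))) X) T' ↔
      DominoPred shapes X T := by
  obtain ⟨Tf, rfl, -, -, hnd, hfresh⟩ := hT
  constructor
  · rintro ⟨x, hx, hxT', hxX, -⟩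
    refine ⟨x, hx, fun t ht => ?_, hxX⟩
    obtain ⟨p, hp, htp⟩ := hxT' t ht
    exact ⟨p, List.mem_append_left _ hp, htp⟩
  · rintro ⟨y, hy, hyT, hyX⟩
    have hyT' : ∀ t ∈ y, ∃ p ∈ T', Realizes shapes t p := fun t ht => by
      obtain ⟨p, hp, htp⟩ := hyT t ht
      rcases List.mem_append.1 hp with hp | hp
      · exact ⟨p, hp, htp⟩
      · exact absurd htp (not_realizes_of_mem_fresh shapes hnd hfresh hy hyT ht hp)
    refine ⟨y, hy, hyT', hyX, ?_⟩
    rintro _ ⟨t, ht, rfl⟩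
    obtain ⟨p, hp, htp⟩ := hyT' t ht
    exact ⟨shapes p.1, mem_image_of_mem _ (hT' p hp), htp.1⟩

theorem statement_12_general (k : ℕ) (shapes : Fin k → Rhombus)
    (X : Set (Set Rhombus))
    (S : Finset (Fin k)) :
    ∃ φ : List (SymbTile k) → List (SymbTile k),
      Computable φ ∧
      (∀ T' : List (SymbTile k), (∀ t ∈ T', t.1 ∈ S) → FreshExtension S T' (φ T')) ∧
      (∀ T' : List (SymbTile k), (∀ t ∈ T', t.1 ∈ S) →
        (DominoPred shapes (restrictShapes (shapes '' (↑S : Set (Fin k))) X) T' ↔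
          DominoPred shapes X (φ T'))) :=
  ⟨freshExtend S, computable_freshExtend S, fun T' _ => freshExtension_freshExtend S T',
    fun T' hT' => dominoPred_restrictShapes_iff_of_freshExtension shapes X hT'
      (freshExtension_freshExtend S T')⟩

/-- Let `X'` be the restriction of the subshift `X` to a
sub-shapeset indexed by `S`.  The map `φ` adding to a `S`-tileset one tile with
fresh colours for each shape outside `S` is computable and satisfies:
`T'` admits a valid tiling projecting into `X'` iff `φ T'` admits a valid tiling
projecting into `X`.  Consequently `Domino(X')` many-one reduces to `Domino(X)`. -/
theorem statement_12 (k : ℕ) (shapes : Fin k → Rhombus)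
    (hval : ∀ i, (shapes i).IsValid)
    (X : Set (Set Rhombus)) (hsub : IsSubshift (Set.range shapes) X)
    (S : Finset (Fin k)) :
    ∃ φ : List (SymbTile k) → List (SymbTile k),
      Computable φ ∧
      (∀ T' : List (SymbTile k), (∀ t ∈ T', t.1 ∈ S) → FreshExtension S T' (φ T')) ∧
      (∀ T' : List (SymbTile k), (∀ t ∈ T', t.1 ∈ S) →
        (DominoPred shapes (restrictShapes (shapes '' (↑S : Set (Fin k))) X) T' ↔
          DominoPred shapes X (φ T'))) :=
  statement_12_general k shapes X S
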